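/- arXiv:1701.02400 — 5 statements merged into one kernel-verified Lean document; each statement's English description precedes it below -/
import Mathlib

section
/- Let μ be a quasi-infinitely divisible distribution with characteristic exponent Ψ_μ (the unique continuous function with Ψ_μ(0)=0 and μ̂ = exp Ψ_μ) and Gaussian variance a = ζ({0}). Then a = -2 lim_{|z|→∞} z^{-2} Ψ_μ(z), and in particular a ≥ 0. -/
open MeasureTheory Complex Filter

noncomputable section

/-- Characteristic function of a measure on ℝ. -/
def charFn (μ : Measure ℝ) (z : ℝ) : ℂ := ∫ x, Complex.exp (Complex.I * z * x) ∂μ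

/-- A representation function: bounded, Borel measurable, with (c x - x)/x² → 0 as x → 0. -/
def IsRepFn (c : ℝ → ℝ) : Prop :=
  Measurable c ∧ (∃ M : ℝ, ∀ x, |c x| ≤ M) ∧
    Tendsto (fun x => (c x - x) / x ^ 2) (nhdsWithin 0 {(0:ℝ)}ᶜ) (nhds 0)

/-- The kernel g_c(x,z). -/
def gKer (c : ℝ → ℝ) (x z : ℝ) : ℂ :=
  if x = 0 then -(z:ℂ)^2 / 2
  else (Complex.exp (Complex.I * z * x) - 1 - Complex.I * z * c x) / ((min 1 (x^2) : ℝ) : ℂ)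

/-- Quasi-infinitely divisible w.r.t. c: the characteristic function has a
Lévy–Khintchine type representation with a finite signed measure ζ = ζp - ζm
(given by its Jordan decomposition). -/
def IsQID (c : ℝ → ℝ) (μ : Measure ℝ) : Prop :=
  ∃ γ : ℝ, ∃ ζp ζm : Measure ℝ, IsFiniteMeasure ζp ∧ IsFiniteMeasure ζm ∧
    Measure.MutuallySingular ζp ζm ∧
    ∀ z : ℝ, charFn μ z =
      Complex.exp (Complex.I * γ * z + (∫ x, gKer c x z ∂ζp) - ∫ x, gKer c x z ∂ζm)

/-- Infinitely divisible w.r.t. c: as above with a (positive) finite measure ζ. -/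
def IsID (c : ℝ → ℝ) (μ : Measure ℝ) : Prop :=
  ∃ γ : ℝ, ∃ ζ : Measure ℝ, IsFiniteMeasure ζ ∧
    ∀ z : ℝ, charFn μ z = Complex.exp (Complex.I * γ * z + ∫ x, gKer c x z ∂ζ)

/-- The Lévy–Khintchine integral ∫ (e^{izx} - 1 - izc(x)) dν. -/
def lkInt (c : ℝ → ℝ) (ν : Measure ℝ) (z : ℝ) : ℂ :=
  ∫ x, (Complex.exp (Complex.I * z * x) - 1 - Complex.I * z * c x) ∂ν

/-- μ has characteristic triplet (a, ν, γ) w.r.t. c, where the quasi-Lévy measure ν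
is given by its Jordan decomposition ν = νp - νm. -/
def HasTriplet (c : ℝ → ℝ) (μ : Measure ℝ) (a : ℝ) (νp νm : Measure ℝ) (γ : ℝ) : Prop :=
  Measure.MutuallySingular νp νm ∧ νp {0} = 0 ∧ νm {0} = 0 ∧
  (∫⁻ x, ENNReal.ofReal (min 1 (x^2)) ∂(νp + νm)) < ⊤ ∧
  ∀ z : ℝ, charFn μ z =
    Complex.exp (Complex.I * γ * z - a * z^2 / 2 + lkInt c νp z - lkInt c νm z)

/-!
Ψ and the exponent of the representation are continuous logarithms of μ̂ agreeing at 0, hence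
equal. The kernel satisfies ‖g_c(x,z)‖ ≤ C(1 + z²) uniformly in x, and for fixed x ≠ 0 it grows
only linearly in z, so by dominated convergence the part of ∫ g_c(·,z) dζ off the origin is
o(z²), while the atom at 0 contributes -ζ({0}) z²/2. Since |μ̂| ≤ 1, Re Ψ ≤ 0, which forces
ζ({0}) ≥ 0.
-/

theorem Complex.eq_of_continuous_of_exp_eq {X : Type*} [TopologicalSpace X] [PreconnectedSpace X]
    {f g : X → ℂ} (hf : Continuous f) (hg : Continuous g)
    (hexp : ∀ x, Complex.exp (f x) = Complex.exp (g x)) (x₀ : X) (h₀ : f x₀ = g x₀) : f = g :=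
  Complex.isCoveringMap_exp.eq_of_comp_eq hf hg (funext fun x => Subtype.ext (hexp x)) x₀ h₀

theorem tendsto_div_sq_cocompact_of_norm_le {f : ℝ → ℂ} {A B : ℝ}
    (hf : ∀ z, ‖f z‖ ≤ A + B * |z|) :
    Tendsto (fun z : ℝ => f z / (z : ℂ) ^ 2) (cocompact ℝ) (nhds 0) := by
  have hinv : Tendsto (fun z : ℝ => |z|⁻¹) (cocompact ℝ) (nhds 0) :=
    tendsto_norm_cocompact_atTop.inv_tendsto_atTop
  have hbound : Tendsto (fun z : ℝ => A * (|z|⁻¹) ^ 2 + B * |z|⁻¹) (cocompact ℝ) (nhds 0) := by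
    simpa using (hinv.pow 2).const_mul A |>.add (hinv.const_mul B)
  refine squeeze_zero_norm (fun z => ?_) hbound
  rcases eq_or_ne z 0 with rfl | hz
  · simp
  rw [norm_div, norm_pow, Complex.norm_real, Real.norm_eq_abs]
  calc ‖f z‖ / |z| ^ 2 ≤ (A + B * |z|) / |z| ^ 2 := by gcongr; exact hf z
    _ = A * (|z|⁻¹) ^ 2 + B * |z|⁻¹ := by field_simp

theorem Complex.norm_exp_I_mul_ofReal_sub_one_sub_le (t : ℝ) :
    ‖Complex.exp (Complex.I * t) - 1 - Complex.I * t‖ ≤ 2 * t ^ 2 := by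
  have hIt : ‖Complex.I * t‖ = |t| := by simp
  rcases le_or_gt |t| 1 with ht | ht
  · calc _ ≤ ‖Complex.I * t‖ ^ 2 := Complex.norm_exp_sub_one_sub_id_le (hIt ▸ ht)
      _ ≤ 2 * t ^ 2 := by rw [hIt, sq_abs]; nlinarith [sq_nonneg t]
  · calc _ ≤ ‖Complex.exp (Complex.I * t) - 1‖ + ‖Complex.I * t‖ := norm_sub_le _ _
      _ ≤ |t| + |t| := by
          rw [hIt]; gcongr; simpa using Real.norm_exp_I_mul_ofReal_sub_one_le (x := t)
      _ ≤ 2 * t ^ 2 := by nlinarith [sq_abs t]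

theorem IsRepFn.exists_abs_sub_le_sq {c : ℝ → ℝ} (hc : IsRepFn c) :
    ∃ B, 0 ≤ B ∧ ∀ x, x ≠ 0 → |x| ≤ 1 → |c x - x| ≤ B * x ^ 2 := by
  obtain ⟨-, ⟨M, hM⟩, hlim⟩ := hc
  obtain ⟨δ, hδ, hnear⟩ := Metric.tendsto_nhdsWithin_nhds.mp hlim 1 one_pos
  refine ⟨max 1 ((M + 1) / min δ 1 ^ 2), by positivity, fun x hx hx1 => ?_⟩
  have hx2 : 0 < x ^ 2 := by positivity
  rcases lt_or_ge |x| δ with hxδ | hxδ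
  · have h := hnear (x := x) hx (by simpa [Real.dist_eq] using hxδ)
    rw [Real.dist_eq, sub_zero, abs_div, abs_of_pos hx2, div_lt_iff₀ hx2] at h
    nlinarith [le_max_left 1 ((M + 1) / min δ 1 ^ 2)]
  · have hmin : min δ 1 ^ 2 ≤ x ^ 2 := by
      rw [← sq_abs x]; gcongr; exact min_le_of_left_le hxδ
    calc |c x - x| ≤ M + 1 := (abs_sub _ _).trans (add_le_add (hM x) hx1)
      _ = (M + 1) / min δ 1 ^ 2 * min δ 1 ^ 2 := by field_simp
      _ ≤ max 1 ((M + 1) / min δ 1 ^ 2) * x ^ 2 := by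
          gcongr
          · exact le_max_right _ _

theorem norm_lkInt_integrand_le {c : ℝ → ℝ} {M : ℝ} (hM : ∀ x, |c x| ≤ M) (x z : ℝ) :
    ‖Complex.exp (Complex.I * z * x) - 1 - Complex.I * z * c x‖ ≤ 2 + M * |z| := by
  have hexp : ‖Complex.exp (Complex.I * z * x)‖ = 1 := by
    rw [Complex.norm_exp]; simp
  calc _ ≤ ‖Complex.exp (Complex.I * z * x)‖ + ‖(1 : ℂ)‖ + ‖Complex.I * z * c x‖ :=
        (norm_sub_le _ _).trans (add_le_add_left (norm_sub_le _ _) _)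
    _ = 2 + |z| * |c x| := by
        simp only [hexp, norm_one, norm_mul, Complex.norm_I, Complex.norm_real, Real.norm_eq_abs]
        norm_num
    _ ≤ 2 + M * |z| := by nlinarith [hM x, abs_nonneg z]

theorem norm_gKer_le_of_sq_le_one {c : ℝ → ℝ} {B : ℝ} (hB : ∀ x, x ≠ 0 → |x| ≤ 1 → |c x - x| ≤ B * x ^ 2)
    {x : ℝ} (hx : x ≠ 0) (hx1 : x ^ 2 ≤ 1) (z : ℝ) : ‖gKer c x z‖ ≤ 2 * z ^ 2 + B * |z| := by
  have hx2 : 0 < x ^ 2 := by positivity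
  have hsplit : Complex.exp (Complex.I * z * x) - 1 - Complex.I * z * c x =
      (Complex.exp (Complex.I * ↑(z * x)) - 1 - Complex.I * ↑(z * x)) +
        Complex.I * z * ↑(x - c x) := by push_cast; ring_nf
  have hnum : ‖Complex.exp (Complex.I * z * x) - 1 - Complex.I * z * c x‖ ≤
      (2 * z ^ 2 + B * |z|) * x ^ 2 := by
    rw [hsplit]
    calc _ ≤ 2 * (z * x) ^ 2 + |z| * |x - c x| := by
          refine (norm_add_le _ _).trans (add_le_add
            (Complex.norm_exp_I_mul_ofReal_sub_one_sub_le _) (le_of_eq ?_))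
          simp only [norm_mul, Complex.norm_I, Complex.norm_real, Real.norm_eq_abs, one_mul]
      _ ≤ 2 * (z * x) ^ 2 + |z| * (B * x ^ 2) := by
          rw [abs_sub_comm]; gcongr; exact hB x hx (abs_le_one_iff_mul_self_le_one.mpr (by nlinarith))
      _ = (2 * z ^ 2 + B * |z|) * x ^ 2 := by ring
  rw [gKer, if_neg hx, min_eq_right hx1, norm_div, Complex.norm_real, Real.norm_of_nonneg hx2.le,
    div_le_iff₀ hx2]
  exact hnum

theorem IsRepFn.exists_norm_gKer_le {c : ℝ → ℝ} (hc : IsRepFn c) :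
    ∃ C, 0 ≤ C ∧ ∀ x z, ‖gKer c x z‖ ≤ C * (1 + z ^ 2) := by
  obtain ⟨B, hB0, hB⟩ := hc.exists_abs_sub_le_sq
  obtain ⟨-, ⟨M, hM⟩, -⟩ := hc
  have hM0 : 0 ≤ M := (abs_nonneg _).trans (hM 0)
  have habs : ∀ z : ℝ, |z| ≤ 1 + z ^ 2 := fun z => by nlinarith [sq_abs z, abs_nonneg z]
  refine ⟨2 + M + B, by positivity, fun x z => ?_⟩
  have hz : 0 ≤ 1 + z ^ 2 := by positivity
  rcases eq_or_ne x 0 with rfl | hx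
  · simp only [gKer, if_true, norm_div, norm_neg, norm_pow, Complex.norm_real, Real.norm_eq_abs,
      sq_abs, Complex.norm_ofNat]
    nlinarith
  rcases le_or_gt (x ^ 2) 1 with hx1 | hx1
  · calc _ ≤ 2 * z ^ 2 + B * |z| := norm_gKer_le_of_sq_le_one hB hx hx1 z
      _ ≤ _ := by nlinarith [habs z, mul_le_mul_of_nonneg_left (habs z) hB0]
  · rw [gKer, if_neg hx, min_eq_left hx1.le, Complex.ofReal_one, div_one]
    calc _ ≤ 2 + M * |z| := norm_lkInt_integrand_le hM x z
      _ ≤ _ := by nlinarith [habs z, mul_le_mul_of_nonneg_left (habs z) hM0]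

theorem measurable_gKer {c : ℝ → ℝ} (hc : Measurable c) (z : ℝ) :
    Measurable fun x => gKer c x z :=
  Measurable.ite (measurableSet_singleton 0) measurable_const (by fun_prop)

theorem continuous_gKer (c : ℝ → ℝ) (x : ℝ) : Continuous fun z => gKer c x z := by
  unfold gKer; split_ifs <;> fun_prop

theorem IsRepFn.integrable_gKer {c : ℝ → ℝ} (hc : IsRepFn c) (ζ : Measure ℝ) [IsFiniteMeasure ζ]
    (z : ℝ) : Integrable (fun x => gKer c x z) ζ := by
  obtain ⟨C, hC0, hC⟩ := hc.exists_norm_gKer_le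
  exact (integrable_const (C * (1 + z ^ 2))).mono' (measurable_gKer hc.1 z).aestronglyMeasurable
    (ae_of_all _ fun x => hC x z)

theorem IsRepFn.continuous_integral_gKer {c : ℝ → ℝ} (hc : IsRepFn c) (ζ : Measure ℝ)
    [IsFiniteMeasure ζ] : Continuous fun z => ∫ x, gKer c x z ∂ζ := by
  obtain ⟨C, hC0, hC⟩ := hc.exists_norm_gKer_le
  refine continuous_iff_continuousAt.mpr fun z₀ => continuousAt_of_dominated
    (bound := fun _ => C * (1 + (|z₀| + 1) ^ 2))
    (Eventually.of_forall fun z => (measurable_gKer hc.1 z).aestronglyMeasurable) ?_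
    (integrable_const _) (ae_of_all _ fun x => (continuous_gKer c x).continuousAt)
  filter_upwards [Metric.ball_mem_nhds z₀ one_pos] with z hz
  refine ae_of_all _ fun x => (hC x z).trans ?_
  have hz : |z| ≤ |z₀| + 1 := by
    have := abs_sub_abs_le_abs_sub z z₀
    rw [Metric.mem_ball, Real.dist_eq] at hz
    linarith
  have hz2 : z ^ 2 ≤ (|z₀| + 1) ^ 2 := by rw [← sq_abs z]; gcongr
  gcongr

theorem integral_gKer_eq {c : ℝ → ℝ} (hc : IsRepFn c) (ζ : Measure ℝ) [IsFiniteMeasure ζ]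
    (z : ℝ) : ∫ x, gKer c x z ∂ζ =
      (ζ {0}).toReal * (-(z : ℂ) ^ 2 / 2) + ∫ x in {(0 : ℝ)}ᶜ, gKer c x z ∂ζ := by
  rw [← integral_add_compl (measurableSet_singleton 0) (hc.integrable_gKer ζ z),
    integral_singleton, gKer, if_pos rfl, Complex.real_smul, measureReal_def]

theorem IsRepFn.tendsto_setIntegral_compl_zero_gKer_div_sq {c : ℝ → ℝ} (hc : IsRepFn c)
    (ζ : Measure ℝ) [IsFiniteMeasure ζ] :
    Tendsto (fun z : ℝ => (∫ x in {(0 : ℝ)}ᶜ, gKer c x z ∂ζ) / (z : ℂ) ^ 2)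
      (cocompact ℝ) (nhds 0) := by
  have : (cocompact ℝ).IsCountablyGenerated := by
    rw [cocompact_eq_atBot_atTop]; infer_instance
  obtain ⟨C, hC0, hC⟩ := hc.exists_norm_gKer_le
  obtain ⟨hm, ⟨M, hM⟩, -⟩ := hc
  simp_rw [← integral_div]
  rw [← integral_zero ℝ ℂ]
  refine tendsto_integral_filter_of_dominated_convergence (fun _ => 2 * C)
    (Eventually.of_forall fun z => ((measurable_gKer hm z).div_const _).aestronglyMeasurable)
    ?_ (integrable_const _) ?_
  · filter_upwards [tendsto_norm_cocompact_atTop.eventually_ge_atTop 1] with z hz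
    refine ae_of_all _ fun x => ?_
    rw [Real.norm_eq_abs] at hz
    have hz2 : 1 ≤ z ^ 2 := by nlinarith [sq_abs z]
    rw [norm_div, norm_pow, Complex.norm_real, Real.norm_eq_abs, sq_abs,
      div_le_iff₀ (by positivity)]
    nlinarith [hC x z]
  · filter_upwards [ae_restrict_mem (measurableSet_singleton (0 : ℝ)).compl] with x hx
    have hx : x ≠ 0 := hx
    have hK : 0 < min 1 (x ^ 2) := lt_min one_pos (by positivity)
    refine tendsto_div_sq_cocompact_of_norm_le (A := 2 / min 1 (x ^ 2))
      (B := M / min 1 (x ^ 2)) fun z => ?_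
    rw [gKer, if_neg hx, norm_div, Complex.norm_real, Real.norm_of_nonneg hK.le]
    calc _ ≤ (2 + M * |z|) / min 1 (x ^ 2) := by
          gcongr; exact norm_lkInt_integrand_le hM x z
      _ = _ := by ring

theorem IsRepFn.tendsto_integral_gKer_div_sq {c : ℝ → ℝ} (hc : IsRepFn c) (ζ : Measure ℝ)
    [IsFiniteMeasure ζ] :
    Tendsto (fun z : ℝ => (∫ x, gKer c x z ∂ζ) / (z : ℂ) ^ 2) (cocompact ℝ)
      (nhds (-((ζ {0}).toReal : ℂ) / 2)) := by
  have h := (hc.tendsto_setIntegral_compl_zero_gKer_div_sq ζ).const_add (-((ζ {0}).toReal : ℂ) / 2)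
  rw [add_zero] at h
  refine h.congr' ?_
  filter_upwards [tendsto_norm_cocompact_atTop.eventually_ne_atTop 0] with z hz
  have hz : (z : ℂ) ≠ 0 := by simpa using hz
  rw [integral_gKer_eq hc ζ z]
  field_simp

theorem norm_charFn_le_one (μ : Measure ℝ) [IsProbabilityMeasure μ] (z : ℝ) :
    ‖charFn μ z‖ ≤ 1 := by
  have h : charFn μ z = charFun μ z := by
    rw [charFn, charFun_apply_real]; ring_nf
  exact h ▸ norm_charFun_le_one z

theorem re_nonpos_of_charFn_eq_exp {μ : Measure ℝ} [IsProbabilityMeasure μ] {z : ℝ} {w : ℂ}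
    (h : charFn μ z = Complex.exp w) : w.re ≤ 0 := by
  rw [← Real.exp_le_one_iff, ← Complex.norm_exp, ← h]
  exact norm_charFn_le_one μ z

theorem stmt1_general (c : ℝ → ℝ) (hc : IsRepFn c) (μ : Measure ℝ) [IsProbabilityMeasure μ]
    (γ : ℝ) (ζp ζm : Measure ℝ) [IsFiniteMeasure ζp] [IsFiniteMeasure ζm]
    (hrep : ∀ z : ℝ, charFn μ z =
      Complex.exp (Complex.I * γ * z + (∫ x, gKer c x z ∂ζp) - ∫ x, gKer c x z ∂ζm))
    (Ψ : ℝ → ℂ) (hΨc : Continuous Ψ) (hΨ0 : Ψ 0 = 0)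
    (hΨ : ∀ z : ℝ, charFn μ z = Complex.exp (Ψ z)) :
    Tendsto (fun z : ℝ => Ψ z / (z : ℂ) ^ 2) (cocompact ℝ)
      (nhds (-((((ζp {0}).toReal - (ζm {0}).toReal : ℝ) : ℂ) / 2))) ∧
    0 ≤ (ζp {0}).toReal - (ζm {0}).toReal := by
  have hexponent : Continuous fun z : ℝ =>
      Complex.I * γ * z + (∫ x, gKer c x z ∂ζp) - ∫ x, gKer c x z ∂ζm :=
    ((by fun_prop : Continuous fun z : ℝ => Complex.I * γ * z).add
      (hc.continuous_integral_gKer ζp)).sub (hc.continuous_integral_gKer ζm)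
  have hΨ_eq := Complex.eq_of_continuous_of_exp_eq hΨc hexponent
    (fun z => by rw [← hΨ, hrep]) 0 (by simp [hΨ0, gKer])
  have hγ : Tendsto (fun z : ℝ => Complex.I * γ * z / (z : ℂ) ^ 2) (cocompact ℝ) (nhds 0) :=
    tendsto_div_sq_cocompact_of_norm_le (A := 0) (B := |γ|) fun z => by simp
  have hlim : Tendsto (fun z : ℝ => Ψ z / (z : ℂ) ^ 2) (cocompact ℝ)
      (nhds (-((((ζp {0}).toReal - (ζm {0}).toReal : ℝ) : ℂ) / 2))) := by
    rw [hΨ_eq]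
    simp only [add_div, sub_div]
    convert (hγ.add (hc.tendsto_integral_gKer_div_sq ζp)).sub
      (hc.tendsto_integral_gKer_div_sq ζm) using 2
    push_cast
    ring
  refine ⟨hlim, ?_⟩
  have hre : ∀ z : ℝ, (Ψ z / (z : ℂ) ^ 2).re ≤ 0 := fun z => by
    rw [← Complex.ofReal_pow, Complex.div_ofReal_re]
    exact div_nonpos_of_nonpos_of_nonneg (re_nonpos_of_charFn_eq_exp (hΨ z)) (sq_nonneg z)
  have := le_of_tendsto' ((Complex.continuous_re.tendsto _).comp hlim) hre
  simp only [Complex.neg_re, Complex.div_ofNat_re, Complex.ofReal_re] at this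
  linarith

/-- the Gaussian variance a = ζ({0}) satisfies
a = -2 lim_{|z|→∞} z⁻² Ψ_μ(z), in particular a ≥ 0. -/
theorem stmt1 (c : ℝ → ℝ) (hc : IsRepFn c) (μ : Measure ℝ) [IsProbabilityMeasure μ]
    (γ : ℝ) (ζp ζm : Measure ℝ) [IsFiniteMeasure ζp] [IsFiniteMeasure ζm]
    (hsing : Measure.MutuallySingular ζp ζm)
    (hrep : ∀ z : ℝ, charFn μ z =
      Complex.exp (Complex.I * γ * z + (∫ x, gKer c x z ∂ζp) - ∫ x, gKer c x z ∂ζm))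
    (Ψ : ℝ → ℂ) (hΨc : Continuous Ψ) (hΨ0 : Ψ 0 = 0)
    (hΨ : ∀ z : ℝ, charFn μ z = Complex.exp (Ψ z)) :
    Tendsto (fun z : ℝ => Ψ z / (z : ℂ) ^ 2) (cocompact ℝ)
      (nhds (-((((ζp {0}).toReal - (ζm {0}).toReal : ℝ) : ℂ) / 2))) ∧
    0 ≤ (ζp {0}).toReal - (ζm {0}).toReal :=
  stmt1_general c hc μ γ ζp ζm hrep Ψ hΨc hΨ0 hΨ
end
end

section
/- Let μ be quasi-infinitely divisible with characteristic triplet (a, ν, γ)_c. Then a + ∫_ℝ x²/(1+x²) ν⁺(dx) ≥ ∫_ℝ x²/(1+x²) ν⁻(dx). -/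
open MeasureTheory Complex Filter

noncomputable section

/-!
Since `μ̂ = exp Ψ` is a characteristic function, `Re Ψ(z) ≤ 0`, i.e.
`∫ (1 - cos zx) dν⁻ ≤ a z² / 2 + ∫ (1 - cos zx) dν⁺` for every `z`.
Integrate this against `e^{-z} dz` on `(0, ∞)`, whose cosine transform is `1 / (1 + x²)` as for the
two-sided exponential law: by Tonelli the cosine terms become
`∫ x² / (1 + x²) dν^±`, since `∫₀^∞ e^{-z} (1 - cos zx) dz = x² / (1 + x²)`, and the quadratic term
becomes `a`, since `∫₀^∞ e^{-z} z² dz = 2`.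
-/

open Real Set

lemma norm_cexp_I_mul_sub_one_sub_le (t : ℝ) : ‖cexp (I * t) - 1 - I * t‖ ≤ 2 * t ^ 2 := by
  have hIt : ‖I * (t : ℂ)‖ = |t| := by simp
  rcases le_or_gt |t| 1 with ht | ht
  · calc ‖cexp (I * t) - 1 - I * t‖ ≤ ‖I * (t : ℂ)‖ ^ 2 :=
          Complex.norm_exp_sub_one_sub_id_le (hIt ▸ ht)
      _ ≤ 2 * t ^ 2 := by rw [hIt, sq_abs]; nlinarith [sq_nonneg t]
  · calc ‖cexp (I * t) - 1 - I * t‖ ≤ ‖cexp (I * t) - 1‖ + ‖I * (t : ℂ)‖ := norm_sub_le _ _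
      _ ≤ |t| + |t| := by
          rw [hIt]; gcongr; simpa using Real.norm_exp_I_mul_ofReal_sub_one_le (x := t)
      _ ≤ 2 * t ^ 2 := by nlinarith [sq_abs t]

lemma one_sub_cos_nonneg (t : ℝ) : 0 ≤ 1 - Real.cos t :=
  sub_nonneg.mpr (Real.cos_le_one t)

lemma one_sub_cos_mul_le (z x : ℝ) : 1 - Real.cos (z * x) ≤ (2 + z ^ 2 / 2) * min 1 (x ^ 2) := by
  have h2 : 1 - Real.cos (z * x) ≤ 2 := by linarith [Real.neg_one_le_cos (z * x)]
  have hsq : 1 - Real.cos (z * x) ≤ z ^ 2 / 2 * x ^ 2 := by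
    linarith [one_sub_sq_div_two_le_cos (x := z * x), mul_pow z x 2]
  rcases le_total 1 (x ^ 2) with hx | hx
  · rw [min_eq_left hx]; nlinarith [sq_nonneg z]
  · rw [min_eq_right hx]; nlinarith [sq_nonneg z, sq_nonneg x]

lemma sq_div_one_add_sq_le_min (x : ℝ) : x ^ 2 / (1 + x ^ 2) ≤ min 1 (x ^ 2) := by
  have h : 0 < 1 + x ^ 2 := by positivity
  rw [div_le_iff₀ h]
  rcases le_total 1 (x ^ 2) with hx | hx
  · rw [min_eq_left hx]; linarith
  · rw [min_eq_right hx]; nlinarith [sq_nonneg x]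

lemma exp_neg_mul_one_sub_cos_eq_re (x z : ℝ) :
    rexp (-z) * (1 - Real.cos (z * x)) = (cexp ((-1 : ℂ) * z) - cexp ((-1 + x * I) * z)).re := by
  have : (-1 + x * I) * (z : ℂ) = ((-z : ℝ) : ℂ) + ((z * x : ℝ) : ℂ) * I := by push_cast; ring
  rw [this, Complex.sub_re, Complex.exp_add, ← Complex.ofReal_exp, Complex.re_ofReal_mul,
    Complex.exp_ofReal_mul_I_re, neg_one_mul, ← Complex.ofReal_neg, ← Complex.ofReal_exp,
    Complex.ofReal_re]
  ring

lemma integrableOn_exp_neg_mul_one_sub_cos (x : ℝ) :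
    IntegrableOn (fun z => rexp (-z) * (1 - Real.cos (z * x))) (Ioi 0) := by
  simp_rw [exp_neg_mul_one_sub_cos_eq_re x]
  exact ((integrableOn_exp_mul_complex_Ioi (by norm_num) 0).sub
    (integrableOn_exp_mul_complex_Ioi (by simp) 0)).re

lemma integral_exp_neg_mul_one_sub_cos (x : ℝ) :
    ∫ z in Ioi 0, rexp (-z) * (1 - Real.cos (z * x)) = x ^ 2 / (1 + x ^ 2) := by
  have ha : (-1 : ℂ).re < 0 := by norm_num
  have hb : (-1 + x * I : ℂ).re < 0 := by simp
  have hre := integral_re ((integrableOn_exp_mul_complex_Ioi ha 0).sub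
    (integrableOn_exp_mul_complex_Ioi hb 0))
  simp only [RCLike.re_to_complex, Pi.sub_apply] at hre
  simp_rw [exp_neg_mul_one_sub_cos_eq_re x]
  rw [hre, integral_sub (integrableOn_exp_mul_complex_Ioi ha 0)
    (integrableOn_exp_mul_complex_Ioi hb 0), integral_exp_mul_complex_Ioi ha,
    integral_exp_mul_complex_Ioi hb]
  simp only [Complex.ofReal_zero, mul_zero, Complex.exp_zero]
  rw [Complex.sub_re, Complex.div_re, Complex.div_re]
  simp only [neg_re, one_re, mul_neg, mul_one, neg_neg, normSq_apply, neg_im, one_im, neg_zero,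
    mul_zero, add_zero, ne_eq, one_ne_zero, not_false_eq_true, div_self, div_one, add_re, mul_re,
    ofReal_re, I_re, ofReal_im, I_im, sub_self, add_im, mul_im, zero_add, one_div, zero_mul,
    zero_div]
  field_simp
  ring

lemma integral_exp_neg_mul_sq : ∫ z in Ioi 0, rexp (-z) * z ^ 2 = 2 := by
  have h := Real.Gamma_eq_integral (s := 3) (by norm_num)
  rw [show (3 : ℝ) = (2 : ℕ) + 1 by norm_num, Real.Gamma_nat_eq_factorial] at h
  norm_num at h
  exact h.symm

lemma sFinite_of_withDensity {α : Type*} [MeasurableSpace α] {μ : Measure α} {f : α → ENNReal}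
    (hf : AEMeasurable f μ) (hf_ne_zero : ∀ᵐ x ∂μ, f x ≠ 0) (hf_ne_top : ∀ᵐ x ∂μ, f x ≠ ⊤)
    [SFinite (μ.withDensity f)] : SFinite μ :=
  withDensity_inv_same₀ hf hf_ne_zero hf_ne_top ▸ inferInstance

section MinOneSqIntegrable

variable {ν : Measure ℝ}

lemma sFinite_of_lintegral_min_one_sq_lt_top (hν0 : ν {0} = 0)
    (hν : ∫⁻ x, ENNReal.ofReal (min 1 (x ^ 2)) ∂ν < ⊤) : SFinite ν := by
  have : IsFiniteMeasure (ν.withDensity fun x => ENNReal.ofReal (min 1 (x ^ 2))) :=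
    isFiniteMeasure_withDensity hν.ne
  refine sFinite_of_withDensity (f := fun x => ENNReal.ofReal (min 1 (x ^ 2))) (by fun_prop) ?_
    (ae_of_all _ fun _ => ENNReal.ofReal_ne_top)
  filter_upwards [measure_eq_zero_iff_ae_notMem.mp hν0] with x (hx : x ≠ 0)
  exact (ENNReal.ofReal_pos.mpr (lt_min one_pos (by positivity))).ne'

lemma integrable_min_one_sq (hν : ∫⁻ x, ENNReal.ofReal (min 1 (x ^ 2)) ∂ν < ⊤) :
    Integrable (fun x => min 1 (x ^ 2)) ν := by
  refine (lintegral_ofReal_ne_top_iff_integrable (by fun_prop) ?_).mp hν.ne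
  exact ae_of_all _ fun x => le_min zero_le_one (sq_nonneg x)

lemma integrable_of_norm_le_mul_min_one_sq {E : Type*} [NormedAddCommGroup E] {f : ℝ → E}
    (hν : ∫⁻ x, ENNReal.ofReal (min 1 (x ^ 2)) ∂ν < ⊤) (hf : AEStronglyMeasurable f ν) (K : ℝ)
    (hbound : ∀ᵐ x ∂ν, ‖f x‖ ≤ K * min 1 (x ^ 2)) : Integrable f ν :=
  ((integrable_min_one_sq hν).const_mul K).mono' hf hbound

lemma integrable_one_sub_cos_mul (hν : ∫⁻ x, ENNReal.ofReal (min 1 (x ^ 2)) ∂ν < ⊤) (z : ℝ) :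
    Integrable (fun x => 1 - Real.cos (z * x)) ν :=
  integrable_of_norm_le_mul_min_one_sq hν (by fun_prop) _ <| ae_of_all _ fun x => by
    rw [Real.norm_of_nonneg (one_sub_cos_nonneg _)]
    exact one_sub_cos_mul_le z x

lemma exp_neg_mul_integral_one_sub_cos_nonneg (z : ℝ) :
    0 ≤ rexp (-z) * ∫ x, (1 - Real.cos (z * x)) ∂ν :=
  mul_nonneg (exp_pos _).le (integral_nonneg fun _ => one_sub_cos_nonneg _)

lemma lintegral_exp_neg_mul_integral_one_sub_cos [SFinite ν]
    (hν : ∫⁻ x, ENNReal.ofReal (min 1 (x ^ 2)) ∂ν < ⊤) :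
    ∫⁻ z in Ioi 0, ENNReal.ofReal (rexp (-z) * ∫ x, (1 - Real.cos (z * x)) ∂ν)
      = ∫⁻ x, ENNReal.ofReal (x ^ 2 / (1 + x ^ 2)) ∂ν := by
  have hnonneg : ∀ z x : ℝ, 0 ≤ rexp (-z) * (1 - Real.cos (z * x)) := fun z x =>
    mul_nonneg (exp_pos _).le (one_sub_cos_nonneg _)
  calc _ = ∫⁻ z in Ioi 0, ∫⁻ x, ENNReal.ofReal (rexp (-z) * (1 - Real.cos (z * x))) ∂ν := by
        refine lintegral_congr fun z => ?_
        rw [← integral_const_mul, ofReal_integral_eq_lintegral_ofReal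
          ((integrable_one_sub_cos_mul hν z).const_mul _) (ae_of_all _ (hnonneg z))]
    _ = ∫⁻ x, (∫⁻ z in Ioi 0, ENNReal.ofReal (rexp (-z) * (1 - Real.cos (z * x)))) ∂ν :=
        lintegral_lintegral_swap
          (f := fun z x => ENNReal.ofReal (rexp (-z) * (1 - Real.cos (z * x))))
          (Measurable.aemeasurable (by fun_prop))
    _ = _ := by
        refine lintegral_congr fun x => ?_
        rw [← ofReal_integral_eq_lintegral_ofReal (integrableOn_exp_neg_mul_one_sub_cos x)
          (ae_of_all _ fun z => hnonneg z x), integral_exp_neg_mul_one_sub_cos]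

lemma integrableOn_exp_neg_mul_integral_one_sub_cos [SFinite ν]
    (hν : ∫⁻ x, ENNReal.ofReal (min 1 (x ^ 2)) ∂ν < ⊤) :
    IntegrableOn (fun z => rexp (-z) * ∫ x, (1 - Real.cos (z * x)) ∂ν) (Ioi 0) := by
  have hmeas : StronglyMeasurable fun z => ∫ x, (1 - Real.cos (z * x)) ∂ν :=
    StronglyMeasurable.integral_prod_right (f := fun z x => 1 - Real.cos (z * x))
      (Continuous.stronglyMeasurable (by fun_prop))
  refine ⟨(by fun_prop : Continuous fun z => rexp (-z)).aestronglyMeasurable.mul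
    hmeas.aestronglyMeasurable, (hasFiniteIntegral_iff_ofReal (ae_of_all _ fun z => ?_)).mpr ?_⟩
  · exact exp_neg_mul_integral_one_sub_cos_nonneg z
  · rw [lintegral_exp_neg_mul_integral_one_sub_cos hν]
    exact (lintegral_mono fun x => ENNReal.ofReal_le_ofReal (sq_div_one_add_sq_le_min x)).trans_lt
      hν

lemma integral_exp_neg_mul_integral_one_sub_cos [SFinite ν]
    (hν : ∫⁻ x, ENNReal.ofReal (min 1 (x ^ 2)) ∂ν < ⊤) :
    ∫ z in Ioi 0, rexp (-z) * ∫ x, (1 - Real.cos (z * x)) ∂ν = ∫ x, x ^ 2 / (1 + x ^ 2) ∂ν := by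
  have hint := integrableOn_exp_neg_mul_integral_one_sub_cos hν
  rw [integral_eq_lintegral_of_nonneg_ae (ae_of_all _ exp_neg_mul_integral_one_sub_cos_nonneg)
      hint.aestronglyMeasurable,
    integral_eq_lintegral_of_nonneg_ae (ae_of_all _ fun x => by positivity)
      (by fun_prop : Measurable fun x : ℝ => x ^ 2 / (1 + x ^ 2)).aestronglyMeasurable,
    lintegral_exp_neg_mul_integral_one_sub_cos hν]

end MinOneSqIntegrable

lemma IsRepFn.exists_abs_sub_le_mul_sq {c : ℝ → ℝ} (hc : IsRepFn c) :
    ∃ C, ∀ x, x ≠ 0 → |x| ≤ 1 → |c x - x| ≤ C * x ^ 2 := by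
  obtain ⟨M, hM⟩ := hc.2.1
  obtain ⟨δ, hδ, hnear⟩ := Metric.tendsto_nhdsWithin_nhds.mp hc.2.2 1 one_pos
  have hM1 : 0 ≤ M + 1 := by linarith [(abs_nonneg (c 0)).trans (hM 0)]
  refine ⟨1 + (M + 1) / δ ^ 2, fun x hx hx1 => ?_⟩
  have hx2 : 0 < x ^ 2 := by positivity
  have hfar : 0 ≤ (M + 1) / δ ^ 2 * x ^ 2 := by positivity
  rcases lt_or_ge |x| δ with hlt | hge
  · have h := hnear (x := x) hx (by simpa using hlt)
    rw [Real.dist_eq, sub_zero, abs_div, abs_of_pos hx2, div_lt_one hx2] at h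
    linarith
  · have hδx : δ ^ 2 ≤ x ^ 2 := by nlinarith [sq_abs x, abs_nonneg x]
    calc |c x - x| ≤ |c x| + |x| := abs_sub _ _
      _ ≤ M + 1 := add_le_add (hM x) hx1
      _ = (M + 1) / δ ^ 2 * δ ^ 2 := by field_simp
      _ ≤ (M + 1) / δ ^ 2 * x ^ 2 := by gcongr
      _ ≤ _ := by nlinarith

lemma IsRepFn.exists_norm_lkIntegrand_le {c : ℝ → ℝ} (hc : IsRepFn c) (z : ℝ) :
    ∃ K, ∀ x : ℝ, x ≠ 0 → ‖cexp (I * z * x) - 1 - I * z * c x‖ ≤ K * min 1 (x ^ 2) := by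
  obtain ⟨M, hM⟩ := hc.2.1
  obtain ⟨C, hC⟩ := hc.exists_abs_sub_le_mul_sq
  refine ⟨2 * z ^ 2 + |z| * C + (2 + |z| * M), fun x hx => ?_⟩
  have hzx : I * (z : ℂ) * x = I * ((z * x : ℝ) : ℂ) := by push_cast; ring
  have hM0 : 0 ≤ M := (abs_nonneg _).trans (hM 0)
  have hC0 : 0 ≤ C := by simpa using (abs_nonneg _).trans (hC 1 one_ne_zero (by norm_num))
  rcases le_or_gt |x| 1 with hx1 | hx1
  · have hmin : min 1 (x ^ 2) = x ^ 2 := min_eq_right (by nlinarith [sq_abs x, abs_nonneg x])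
    have hsplit : cexp (I * z * x) - 1 - I * z * c x =
        (cexp (I * ((z * x : ℝ) : ℂ)) - 1 - I * ((z * x : ℝ) : ℂ)) -
          I * z * ((c x - x : ℝ) : ℂ) := by
      rw [← hzx]; push_cast; ring
    calc ‖cexp (I * z * x) - 1 - I * z * c x‖
        ≤ 2 * (z * x) ^ 2 + |z| * |c x - x| := by
          rw [hsplit]
          refine (norm_sub_le _ _).trans (add_le_add (norm_cexp_I_mul_sub_one_sub_le _) ?_)
          simp only [norm_mul, Complex.norm_I, Complex.norm_real, Real.norm_eq_abs, one_mul,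
            le_refl]
      _ ≤ 2 * (z * x) ^ 2 + |z| * (C * x ^ 2) := by gcongr; exact hC x hx hx1
      _ ≤ _ := by
          rw [hmin]
          nlinarith [mul_nonneg (add_nonneg zero_le_two (mul_nonneg (abs_nonneg z) hM0))
            (sq_nonneg x)]
  · have hmin : min 1 (x ^ 2) = 1 := min_eq_left (by nlinarith [sq_abs x, abs_nonneg x])
    calc ‖cexp (I * z * x) - 1 - I * z * c x‖
        ≤ ‖cexp (I * z * x)‖ + ‖(1 : ℂ)‖ + ‖I * z * c x‖ :=
          (norm_sub_le _ _).trans (add_le_add_left (norm_sub_le _ _) _)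
      _ ≤ 2 + |z| * M := by
          rw [hzx, Complex.norm_exp_I_mul_ofReal]
          simp only [norm_one, norm_mul, Complex.norm_I, Complex.norm_real, Real.norm_eq_abs]
          nlinarith [hM x, abs_nonneg z]
      _ ≤ _ := by rw [hmin]; nlinarith [mul_nonneg (abs_nonneg z) hC0, sq_nonneg z]

lemma IsRepFn.integrable_lkIntegrand {c : ℝ → ℝ} (hc : IsRepFn c) {ν : Measure ℝ}
    (hν0 : ν {0} = 0) (hν : ∫⁻ x, ENNReal.ofReal (min 1 (x ^ 2)) ∂ν < ⊤) (z : ℝ) :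
    Integrable (fun x : ℝ => cexp (I * z * x) - 1 - I * z * c x) ν := by
  obtain ⟨K, hK⟩ := hc.exists_norm_lkIntegrand_le z
  have hcm := hc.1
  refine integrable_of_norm_le_mul_min_one_sq hν (by fun_prop) K ?_
  filter_upwards [measure_eq_zero_iff_ae_notMem.mp hν0] with x (hx : x ≠ 0) using hK x hx

lemma IsRepFn.re_lkInt {c : ℝ → ℝ} (hc : IsRepFn c) {ν : Measure ℝ}
    (hν0 : ν {0} = 0) (hν : ∫⁻ x, ENNReal.ofReal (min 1 (x ^ 2)) ∂ν < ⊤) (z : ℝ) :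
    (lkInt c ν z).re = -∫ x, (1 - Real.cos (z * x)) ∂ν := by
  have hre := integral_re (hc.integrable_lkIntegrand hν0 hν z)
  simp only [RCLike.re_to_complex] at hre
  rw [lkInt, ← hre, ← integral_neg]
  congr 1 with x
  have : I * z * x = ((z * x : ℝ) : ℂ) * I := by push_cast; ring
  rw [this, Complex.sub_re, Complex.sub_re, Complex.exp_ofReal_mul_I_re]
  simp

lemma charFn_eq_charFun (μ : Measure ℝ) : charFn μ = charFun μ := by
  ext z
  rw [charFn, charFun_apply_real]
  congr 1 with x
  ring_nf

lemma HasTriplet.lintegral_min_one_sq_lt_top {c : ℝ → ℝ} {μ : Measure ℝ} {a γ : ℝ}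
    {νp νm : Measure ℝ} (h : HasTriplet c μ a νp νm γ) :
    ∫⁻ x, ENNReal.ofReal (min 1 (x ^ 2)) ∂νp < ⊤ ∧
      ∫⁻ x, ENNReal.ofReal (min 1 (x ^ 2)) ∂νm < ⊤ := by
  rw [← ENNReal.add_lt_top, ← lintegral_add_measure]
  exact h.2.2.2.1

lemma HasTriplet.integral_one_sub_cos_le {c : ℝ → ℝ} (hc : IsRepFn c) {μ : Measure ℝ}
    [IsProbabilityMeasure μ] {a γ : ℝ} {νp νm : Measure ℝ} (h : HasTriplet c μ a νp νm γ)
    (z : ℝ) :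
    ∫ x, (1 - Real.cos (z * x)) ∂νm ≤ a * z ^ 2 / 2 + ∫ x, (1 - Real.cos (z * x)) ∂νp := by
  obtain ⟨hp, hm⟩ := h.lintegral_min_one_sq_lt_top
  have hnorm := norm_charFun_le_one (μ := μ) z
  rw [← charFn_eq_charFun, h.2.2.2.2 z, Complex.norm_exp, Real.exp_le_one_iff] at hnorm
  have hdrift : (I * γ * z : ℂ).re = 0 := by simp
  have hquad : ((a : ℂ) * (z : ℂ) ^ 2 / 2).re = a * z ^ 2 / 2 := by
    rw [show (a : ℂ) * (z : ℂ) ^ 2 / 2 = ((a * z ^ 2 / 2 : ℝ) : ℂ) by push_cast; ring,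
      Complex.ofReal_re]
  simp only [Complex.add_re, Complex.sub_re, hdrift, hquad, hc.re_lkInt h.2.1 hp,
    hc.re_lkInt h.2.2.1 hm] at hnorm
  linarith

/-- a + ∫ x²/(1+x²) dν⁺ ≥ ∫ x²/(1+x²) dν⁻. -/
theorem stmt3 (c : ℝ → ℝ) (hc : IsRepFn c) (μ : Measure ℝ) [IsProbabilityMeasure μ]
    (a γ : ℝ) (νp νm : Measure ℝ) (h : HasTriplet c μ a νp νm γ) :
    (∫ x, x ^ 2 / (1 + x ^ 2) ∂νm) ≤ a + ∫ x, x ^ 2 / (1 + x ^ 2) ∂νp := by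
  obtain ⟨hp, hm⟩ := h.lintegral_min_one_sq_lt_top
  have := sFinite_of_lintegral_min_one_sq_lt_top h.2.1 hp
  have := sFinite_of_lintegral_min_one_sq_lt_top h.2.2.1 hm
  have hsq : IntegrableOn (fun z => rexp (-z) * z ^ 2) (Ioi 0) :=
    Integrable.of_integral_ne_zero (by rw [integral_exp_neg_mul_sq]; norm_num)
  calc ∫ x, x ^ 2 / (1 + x ^ 2) ∂νm
      = ∫ z in Ioi 0, rexp (-z) * ∫ x, (1 - Real.cos (z * x)) ∂νm :=
        (integral_exp_neg_mul_integral_one_sub_cos hm).symm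
    _ ≤ ∫ z in Ioi 0, (a / 2 * (rexp (-z) * z ^ 2)
          + rexp (-z) * ∫ x, (1 - Real.cos (z * x)) ∂νp) := by
        refine integral_mono (integrableOn_exp_neg_mul_integral_one_sub_cos hm)
          ((hsq.const_mul _).add (integrableOn_exp_neg_mul_integral_one_sub_cos hp)) fun z => ?_
        have := mul_le_mul_of_nonneg_left (h.integral_one_sub_cos_le hc z) (exp_pos (-z)).le
        linarith
    _ = a + ∫ x, x ^ 2 / (1 + x ^ 2) ∂νp := by
        rw [integral_add (hsq.const_mul _) (integrableOn_exp_neg_mul_integral_one_sub_cos hp),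
          integral_const_mul, integral_exp_neg_mul_sq, integral_exp_neg_mul_integral_one_sub_cos hp]
        ring
end
end

section
/- Let ξ ∈ ℂ with |ξ| > 1 and μ = δ₁ - ξδ₀. Then μ̂(z) = (1-ξ) exp(∫_ℝ (e^{izx} - 1) ν̃(dx)) for all z ∈ ℝ, where ν̃ = -∑_{m=1}^∞ m^{-1} ξ^{-m} δ_m. -/
open Complex

/-! With `w = ξ⁻¹` and `a = e^{iz}`, the `m`-th term of the series is
`w^(m+1)/(m+1) - (w a)^(m+1)/(m+1)`: both halves are Taylor series of `-log (1 - ·)` on the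
unit disc, so the exponent is `log (1 - w a) - log (1 - w)`. Exponentiating gives
`(1 - w a) / (1 - w)`, and `(1 - ξ) (1 - ξ⁻¹ a) / (1 - ξ⁻¹) = a - ξ`. -/

section NormedRing

variable {R : Type*} [SeminormedRing R]

lemma norm_mul_lt_one_of_lt_of_le {w a : R} (hw : ‖w‖ < 1) (ha : ‖a‖ ≤ 1) : ‖w * a‖ < 1 :=
  (norm_mul_le w a).trans_lt (by nlinarith [norm_nonneg w, norm_nonneg a])

lemma one_sub_ne_zero_of_norm_lt_one [NormOneClass R] {u : R} (hu : ‖u‖ < 1) : 1 - u ≠ 0 := by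
  rw [sub_ne_zero]
  rintro rfl
  simp at hu

end NormedRing

namespace Complex

variable {w a : ℂ}

lemma hasSum_log_one_sub_mul_sub_log_one_sub (hw : ‖w‖ < 1) (ha : ‖a‖ ≤ 1) :
    HasSum (fun m : ℕ ↦ -(w ^ (m + 1) / ((m : ℂ) + 1)) * (a ^ (m + 1) - 1))
      (log (1 - w * a) - log (1 - w)) := by
  have hwa := norm_mul_lt_one_of_lt_of_le hw ha
  rw [show log (1 - w * a) - log (1 - w) = -log (1 - w) - -log (1 - w * a) by ring]
  refine ((hasSum_taylorSeries_neg_log' hw).sub (hasSum_taylorSeries_neg_log' hwa)).congr_fun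
    fun m ↦ ?_
  ring

lemma exp_tsum_eq_one_sub_mul_div_one_sub (hw : ‖w‖ < 1) (ha : ‖a‖ ≤ 1) :
    exp (∑' m : ℕ, -(w ^ (m + 1) / ((m : ℂ) + 1)) * (a ^ (m + 1) - 1)) =
      (1 - w * a) / (1 - w) := by
  rw [(hasSum_log_one_sub_mul_sub_log_one_sub hw ha).tsum_eq, exp_sub,
    exp_log (one_sub_ne_zero_of_norm_lt_one (norm_mul_lt_one_of_lt_of_le hw ha)),
    exp_log (one_sub_ne_zero_of_norm_lt_one hw)]

end Complex

/-- for |ξ| > 1 and μ = δ₁ - ξδ₀,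
μ̂(z) = (1-ξ) exp(∫ (e^{izx}-1) dν̃) with ν̃ = -∑_{m≥1} m⁻¹ ξ^{-m} δ_m. -/
theorem stmt7 (ξ : ℂ) (hξ : 1 < ‖ξ‖) :
    ∀ z : ℝ, Complex.exp (Complex.I * z) - ξ =
      (1 - ξ) * Complex.exp (
        ∑' m : ℕ, -(ξ⁻¹ ^ (m + 1) / ((m : ℂ) + 1)) *
          (Complex.exp (Complex.I * z * ((m : ℂ) + 1)) - 1)) := by
  intro z
  have hw : ‖ξ⁻¹‖ < 1 := by
    rw [norm_inv]
    exact inv_lt_one_of_one_lt₀ hξ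
  have ha : ‖exp (I * z)‖ ≤ 1 := (norm_exp_I_mul_ofReal z).le
  have hpow (m : ℕ) : exp (I * z * ((m : ℂ) + 1)) = exp (I * z) ^ (m + 1) := by
    rw [← exp_nat_mul]
    push_cast
    ring_nf
  have hξ0 : ξ ≠ 0 := by
    rintro rfl
    norm_num at hξ
  have hξ1 : ξ - 1 ≠ 0 := by
    rw [sub_ne_zero]
    rintro rfl
    simp at hξ
  simp_rw [hpow, exp_tsum_eq_one_sub_mul_div_one_sub hw ha]
  field_simp
  ring
end

section
/- The Bernoulli distribution b(1,p) = (1-p)δ₀ + pδ₁ is quasi-infinitely divisible if and only if p ≠ 1/2. -/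
open MeasureTheory Complex Filter

noncomputable section

/-! For `p = 1/2` the characteristic function `(1 + e^{iz})/2` vanishes at `z = π`, which an
exponential cannot do. Otherwise put `q = min(p, 1-p)/max(p, 1-p) < 1` and `d = ±1`; then
`charFn μ z = e^{iβz} (1 + q e^{idz})/(1 + q)`, and the Taylor series of `log (1 + w)` writes
`log ((1 + q e^{idz})/(1 + q))` as `∑ₖ (-1)^(k+1) qᵏ/k (e^{ikdz} - 1)`. Since `g_c(x, z)` is just
`e^{izx} - 1 - izc(x)` for `|x| ≥ 1`, this is a drift `iCz` plus `∫ g_c(x, z) ζ(dx)` for the finite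
signed measure `ζ = ∑ₖ (-1)^(k+1) qᵏ/k δ_{kd}`, whose Jordan decomposition is read off from the
signs of the weights because the atoms `kd` are distinct. -/

section DiracSeries

variable {α : Type*} [MeasurableSpace α]

/-- `ENNReal.ofReal` truncates negative weights, so `diracSeries w x` and `diracSeries (-w) x` are
the positive and negative parts of the signed measure `∑ₙ w n • δ_{x n}`. -/
def diracSeries (w : ℕ → ℝ) (x : ℕ → α) : Measure α :=
  Measure.sum fun n => ENNReal.ofReal (w n) • Measure.dirac (x n)

lemma isFiniteMeasure_diracSeries {w : ℕ → ℝ} (hw : Summable w) (x : ℕ → α) :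
    IsFiniteMeasure (diracSeries w x) := by
  constructor
  rw [diracSeries, Measure.sum_apply _ MeasurableSet.univ]
  calc ∑' n, (ENNReal.ofReal (w n) • Measure.dirac (x n)) Set.univ
      ≤ ∑' n, ENNReal.ofReal |w n| :=
        ENNReal.tsum_le_tsum fun n => by simpa using ENNReal.ofReal_le_ofReal (le_abs_self _)
    _ < ⊤ := by
        rw [← ENNReal.ofReal_tsum_of_nonneg (fun n => abs_nonneg _) hw.abs]
        exact ENNReal.ofReal_lt_top

lemma mutuallySingular_diracSeries_neg {x : ℕ → α} (hx : Function.Injective x)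
    [MeasurableSingletonClass α] (w : ℕ → ℝ) :
    diracSeries w x ⟂ₘ diracSeries (-w) x := by
  refine Measure.MutuallySingular.sum_left.2 fun m =>
    Measure.MutuallySingular.sum_right.2 fun n => ?_
  rcases eq_or_ne m n with rfl | hmn
  · rcases le_total (w m) 0 with h | h
    · simp [ENNReal.ofReal_eq_zero.2 h]
    · simp [ENNReal.ofReal_eq_zero.2 (neg_nonpos.2 h)]
  · have hdirac : Measure.dirac (x m) ⟂ₘ Measure.dirac (x n) :=
      ⟨{x m}ᶜ, (measurableSet_singleton _).compl, by simp, by simp [hx.ne hmn.symm]⟩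
    exact ((hdirac.smul _).symm.smul _).symm

lemma integral_diracSeries_sub_neg [MeasurableSingletonClass α] {E : Type*}
    [NormedAddCommGroup E] [NormedSpace ℝ E] [FiniteDimensional ℝ E]
    (w : ℕ → ℝ) (x : ℕ → α) {f : α → E} (hf : Summable fun n => |w n| * ‖f (x n)‖) :
    ∫ a, f a ∂diracSeries w x - ∫ a, f a ∂diracSeries (-w) x = ∑' n, w n • f (x n) := by
  have hsum : ∀ v : ℕ → ℝ, (∀ n, |v n| = |w n|) → Summable fun n => max (v n) 0 • f (x n) :=
    fun v hv => hf.of_norm_bounded fun n => by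
      rw [norm_smul, Real.norm_eq_abs, ← hv, abs_of_nonneg (le_max_right _ _)]
      exact mul_le_mul_of_nonneg_right (max_le (le_abs_self _) (abs_nonneg _)) (norm_nonneg _)
  simp only [diracSeries, integral_sum_dirac (fun _ => ENNReal.ofReal_ne_top),
    ENNReal.toReal_ofReal']
  rw [← (hsum w fun _ => rfl).tsum_sub (hsum (-w) fun _ => abs_neg _)]
  congr 1 with n
  rw [← sub_smul, Pi.neg_apply]
  rcases le_total (w n) 0 with h | h <;> simp [h]

end DiracSeries

lemma gKer_of_one_le_sq (c : ℝ → ℝ) {x : ℝ} (hx : 1 ≤ x ^ 2) (z : ℝ) :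
    gKer c x z = exp (I * z * x) - 1 - I * z * c x := by
  have hx0 : x ≠ 0 := by rintro rfl; norm_num at hx
  simp [gKer, hx0, min_eq_left hx]

lemma norm_gKer_le_of_one_le_sq {c : ℝ → ℝ} {M : ℝ} (hM : ∀ x, |c x| ≤ M) {x : ℝ}
    (hx : 1 ≤ x ^ 2) (z : ℝ) : ‖gKer c x z‖ ≤ 2 + |z| * M := by
  rw [gKer_of_one_le_sq c hx]
  have hexp : ‖exp (I * z * x)‖ = 1 := by
    rw [mul_assoc, ← ofReal_mul]; exact norm_exp_I_mul_ofReal _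
  have hdrift : ‖I * z * c x‖ ≤ |z| * M := by
    simpa using mul_le_mul_of_nonneg_left (hM x) (abs_nonneg z)
  calc ‖exp (I * z * x) - 1 - I * z * c x‖
      ≤ ‖exp (I * z * x)‖ + ‖(1 : ℂ)‖ + ‖I * z * c x‖ :=
        (norm_sub_le _ _).trans (add_le_add_left (norm_sub_le _ _) _)
    _ ≤ 2 + |z| * M := by rw [hexp, norm_one]; linarith

/-- The `k`-th Taylor coefficient of `log (1 + q w)` in `w`; for `k = 0` it is `0`, through
`x / 0 = 0`. -/
def logCoeff (q : ℝ) (k : ℕ) : ℝ := (-1) ^ (k + 1) * q ^ k / k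

lemma logCoeff_zero (q : ℝ) : logCoeff q 0 = 0 := by simp [logCoeff]

lemma abs_logCoeff_le {q : ℝ} (hq : 0 ≤ q) (k : ℕ) : |logCoeff q k| ≤ q ^ k := by
  simp only [logCoeff, abs_div, abs_mul, abs_pow, abs_neg, abs_one, one_pow, one_mul,
    abs_of_nonneg hq, Nat.abs_cast]
  rcases k.eq_zero_or_pos with rfl | hk
  · simp
  · exact div_le_self (pow_nonneg hq k) (by exact_mod_cast hk)

lemma summable_logCoeff {q : ℝ} (hq0 : 0 ≤ q) (hq1 : q < 1) : Summable (logCoeff q) :=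
  (summable_geometric_of_lt_one hq0 hq1).of_norm_bounded (abs_logCoeff_le hq0)

lemma norm_ofReal_mul_exp_I_mul_lt_one {q : ℝ} (hq0 : 0 ≤ q) (hq1 : q < 1) (t : ℝ) :
    ‖(q : ℂ) * exp (I * t)‖ < 1 := by
  rwa [norm_mul, norm_exp_I_mul_ofReal, mul_one, norm_real, Real.norm_of_nonneg hq0]

lemma hasSum_logCoeff_complex {q : ℝ} (hq0 : 0 ≤ q) (hq1 : q < 1) (t : ℝ) :
    HasSum (fun k : ℕ => (logCoeff q k : ℂ) * exp (I * t * k)) (log (1 + q * exp (I * t))) := by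
  convert hasSum_taylorSeries_log (norm_ofReal_mul_exp_I_mul_lt_one hq0 hq1 t) using 2 with k
  rw [mul_pow, ← exp_nat_mul, logCoeff]
  push_cast
  ring_nf

lemma one_le_sq_mul_natCast {d : ℝ} (hd : 1 ≤ d ^ 2) {k : ℕ} (hk : k ≠ 0) : 1 ≤ (d * k) ^ 2 := by
  rw [mul_pow]
  nlinarith [(by exact_mod_cast Nat.one_le_iff_ne_zero.2 hk : (1 : ℝ) ≤ k)]

lemma hasSum_logCoeff_mul_gKer {c : ℝ → ℝ} {M : ℝ} (hM : ∀ x, |c x| ≤ M) {q d : ℝ}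
    (hq0 : 0 ≤ q) (hq1 : q < 1) (hd : 1 ≤ d ^ 2) (z : ℝ) :
    HasSum (fun k : ℕ => (logCoeff q k : ℂ) * gKer c (d * k) z)
      (log (1 + q * exp (I * d * z)) - log (1 + q)
        - I * z * ((∑' k : ℕ, logCoeff q k * c (d * k) : ℝ) : ℂ)) := by
  have hdrift : Summable fun k : ℕ => logCoeff q k * c (d * k) :=
    (summable_logCoeff hq0 hq1).abs.mul_right M |>.of_norm_bounded fun k => by
      rw [norm_mul, Real.norm_eq_abs, Real.norm_eq_abs]
      exact mul_le_mul_of_nonneg_left (hM _) (abs_nonneg _)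
  have hexp := hasSum_logCoeff_complex hq0 hq1 (d * z)
  have hone := hasSum_logCoeff_complex hq0 hq1 0
  have hc := (hasSum_ofReal.2 hdrift.hasSum).mul_left (I * z)
  simp only [Complex.ofReal_zero, mul_zero, zero_mul, exp_zero, mul_one] at hone
  rw [show I * d * z = I * ((d * z : ℝ) : ℂ) by push_cast; ring]
  refine ((hexp.sub hone).sub hc).congr_fun fun k => ?_
  rcases eq_or_ne k 0 with rfl | hk
  · simp [logCoeff_zero]
  · rw [gKer_of_one_le_sq c (one_le_sq_mul_natCast hd hk)]
    push_cast
    ring_nf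

lemma summable_abs_logCoeff_mul_norm_gKer {c : ℝ → ℝ} {M : ℝ} (hM : ∀ x, |c x| ≤ M)
    {q d : ℝ} (hq0 : 0 ≤ q) (hq1 : q < 1) (hd : 1 ≤ d ^ 2) (z : ℝ) :
    Summable fun k : ℕ => |logCoeff q k| * ‖gKer c (d * k) z‖ := by
  have hM0 : 0 ≤ M := (abs_nonneg _).trans (hM 0)
  refine ((summable_geometric_of_lt_one hq0 hq1).mul_right (2 + |z| * M)).of_nonneg_of_le
    (fun _ => by positivity) fun k => ?_
  rcases eq_or_ne k 0 with rfl | hk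
  · simp only [logCoeff_zero, abs_zero, zero_mul, pow_zero, one_mul]
    positivity
  · exact mul_le_mul (abs_logCoeff_le hq0 k)
      (norm_gKer_le_of_one_le_sq hM (one_le_sq_mul_natCast hd hk) z) (norm_nonneg _)
      (pow_nonneg hq0 k)

lemma isQID_of_charFn_eq {c : ℝ → ℝ} {M : ℝ} (hM : ∀ x, |c x| ≤ M) {μ : Measure ℝ}
    {q d β : ℝ} (hq0 : 0 ≤ q) (hq1 : q < 1) (hd : 1 ≤ d ^ 2)
    (hμ : ∀ z : ℝ, charFn μ z = exp (I * β * z)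
      * (1 + q * exp (I * d * z)) / (1 + q)) :
    IsQID c μ := by
  have hd0 : d ≠ 0 := by rintro rfl; norm_num at hd
  have hx : Function.Injective fun k : ℕ => d * k :=
    (mul_right_injective₀ hd0).comp Nat.cast_injective
  have ha := summable_logCoeff hq0 hq1
  refine ⟨β + ∑' k : ℕ, logCoeff q k * c (d * k), diracSeries (logCoeff q) _,
    diracSeries (-logCoeff q) _, isFiniteMeasure_diracSeries ha _,
    isFiniteMeasure_diracSeries ha.neg _, mutuallySingular_diracSeries_neg hx _, fun z => ?_⟩
  have hw : (1 : ℂ) + q * exp (I * d * z) ≠ 0 := by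
    have := slitPlane_ne_zero <| mem_slitPlane_of_norm_lt_one <|
      norm_ofReal_mul_exp_I_mul_lt_one hq0 hq1 (d * z)
    rwa [ofReal_mul, ← mul_assoc] at this
  have hq : (1 : ℂ) + q ≠ 0 := by exact_mod_cast (by linarith : (1 : ℝ) + q ≠ 0)
  have hlog : exp (log (1 + q * exp (I * d * z))
      - log (1 + q)) = (1 + q * exp (I * d * z)) / (1 + q) := by
    rw [exp_sub, exp_log hw, exp_log hq]
  rw [hμ z, mul_div_assoc, ← hlog, ← exp_add, add_sub_assoc,
    integral_diracSeries_sub_neg (f := fun a => gKer c a z) _ _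
      (summable_abs_logCoeff_mul_norm_gKer hM hq0 hq1 hd z)]
  simp only [real_smul]
  rw [(hasSum_logCoeff_mul_gKer hM hq0 hq1 hd z).tsum_eq]
  push_cast
  ring_nf

lemma charFn_bernoulli {p : ℝ} (hp0 : 0 ≤ p) (hp1 : p ≤ 1) (z : ℝ) :
    charFn (ENNReal.ofReal (1 - p) • Measure.dirac 0 + ENNReal.ofReal p • Measure.dirac 1) z
      = (1 - p) + p * exp (I * z) := by
  have hint : ∀ a : ℝ, Integrable (fun x : ℝ => exp (I * z * x))
      (Measure.dirac a) := fun a => integrable_dirac (by simp)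
  rw [charFn, integral_add_measure ((hint 0).smul_measure ENNReal.ofReal_ne_top)
    ((hint 1).smul_measure ENNReal.ofReal_ne_top), integral_smul_measure, integral_smul_measure,
    integral_dirac, integral_dirac]
  simp [ENNReal.toReal_ofReal hp0, ENNReal.toReal_ofReal (sub_nonneg.2 hp1)]

/-- the Bernoulli distribution b(1,p) = (1-p)δ₀ + pδ₁ is
quasi-infinitely divisible iff p ≠ 1/2. -/
theorem stmt10 (c : ℝ → ℝ) (hc : IsRepFn c) (p : ℝ) (hp : p ∈ Set.Ioo (0 : ℝ) 1)
    (μ : Measure ℝ)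
    (hμ : μ = ENNReal.ofReal (1 - p) • Measure.dirac (0 : ℝ)
      + ENNReal.ofReal p • Measure.dirac (1 : ℝ)) :
    IsQID c μ ↔ p ≠ 1 / 2 := by
  obtain ⟨hp0, hp1⟩ := hp
  obtain ⟨-, ⟨M, hM⟩, -⟩ := hc
  have hchar : ∀ z, charFn μ z = (1 - p) + p * exp (I * z) :=
    hμ ▸ charFn_bernoulli hp0.le hp1.le
  constructor
  · rintro ⟨γ, ζp, ζm, -, -, -, hrep⟩ rfl
    refine exp_ne_zero _ ((hrep Real.pi).symm.trans ?_)
    rw [hchar, mul_comm I, exp_pi_mul_I]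
    norm_num
  · intro hne
    rcases hne.lt_or_gt with hlt | hgt
    · refine isQID_of_charFn_eq hM (q := p / (1 - p)) (d := 1) (β := 0) (by bound)
        ((div_lt_one (by linarith)).2 (by linarith)) (by norm_num) fun z => ?_
      have : (1 : ℂ) - p ≠ 0 := by exact_mod_cast (by linarith : (1 : ℝ) - p ≠ 0)
      rw [hchar]
      push_cast
      rw [mul_zero, zero_mul, exp_zero, one_mul, mul_one]
      field_simp
      ring
    · refine isQID_of_charFn_eq hM (q := (1 - p) / p) (d := -1) (β := 1) (by bound)
        ((div_lt_one hp0).2 (by linarith)) (by norm_num) fun z => ?_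
      have : (p : ℂ) ≠ 0 := by exact_mod_cast hp0.ne'
      rw [hchar]
      push_cast
      rw [mul_one, mul_neg_one, neg_mul, exp_neg]
      field_simp
      ring
end
end

section
/- Let h: ℝ → [0,∞) be submultiplicative (h(x+y) ≤ B h(x) h(y) for some B > 0 and all x,y) and let X, Y be independent real random variables. Then E[h(X+Y)] < ∞ if and only if E[h(X)] < ∞ and E[h(Y)] < ∞. -/
open MeasureTheory

lemma key13 {Ω : Type*} [MeasurableSpace Ω] (P : Measure Ω) [IsProbabilityMeasure P]
    (h : ℝ → ℝ) (hmeas : Measurable h) (hnn : ∀ x, 0 ≤ h x)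
    (B : ℝ) (hB : 0 < B) (hsub : ∀ x y : ℝ, h (x + y) ≤ B * h x * h y)
    (hpos : ∀ x, 0 < h x)
    (X Y : Ω → ℝ) (hX : Measurable X) (hY : Measurable Y)
    (hindep : ProbabilityTheory.IndepFun X Y P)
    (hint : Integrable (fun ω => h (X ω + Y ω)) P) :
    Integrable (fun ω => h (X ω)) P := by
  have hmap : P.map (fun ω => (Y ω, X ω)) = (P.map Y).prod (P.map X) :=
    (ProbabilityTheory.indepFun_iff_map_prod_eq_prod_map_map hY.aemeasurable
      hX.aemeasurable).mp hindep.symm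
  have hmeasP : Measurable (fun p : ℝ × ℝ => h (p.2 + p.1)) :=
    hmeas.comp (measurable_snd.add measurable_fst)
  have hprod : Integrable (fun p : ℝ × ℝ => h (p.2 + p.1)) ((P.map Y).prod (P.map X)) := by
    rw [← hmap]
    rw [integrable_map_measure hmeasP.aestronglyMeasurable
      ((hY.prodMk hX).aemeasurable)]
    exact hint
  haveI : IsProbabilityMeasure (P.map Y) := Measure.isProbabilityMeasure_map hY.aemeasurable
  have hae := hprod.prod_right_ae
  obtain ⟨y0, hy0⟩ := hae.exists
  -- hy0 : Integrable (fun x => h (x + y0)) (P.map X)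
  have hXmap : Integrable (fun x => h x) (P.map X) := by
    have hg : Integrable (fun x => B * h (-y0) * h (x + y0)) (P.map X) :=
      hy0.const_mul _
    refine hg.mono (hmeas.aestronglyMeasurable) ?_
    refine Filter.Eventually.of_forall fun x => ?_
    rw [Real.norm_of_nonneg (hnn x), Real.norm_of_nonneg (mul_nonneg (mul_nonneg hB.le (hnn _)) (hnn _))]
    calc h x = h ((x + y0) + (-y0)) := by ring_nf
    _ ≤ B * h (x + y0) * h (-y0) := hsub _ _
    _ = B * h (-y0) * h (x + y0) := by ring
  exact (integrable_map_measure hmeas.aestronglyMeasurable hX.aemeasurable).mp hXmap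

/-- for a submultiplicative h ≥ 0 and independent X, Y,
E h(X+Y) < ∞ iff E h(X) < ∞ and E h(Y) < ∞. -/
theorem stmt13 {Ω : Type*} [MeasurableSpace Ω] (P : Measure Ω) [IsProbabilityMeasure P]
    (h : ℝ → ℝ) (hmeas : Measurable h) (hnn : ∀ x, 0 ≤ h x)
    (B : ℝ) (hB : 0 < B) (hsub : ∀ x y : ℝ, h (x + y) ≤ B * h x * h y)
    (X Y : Ω → ℝ) (hX : Measurable X) (hY : Measurable Y)
    (hindep : ProbabilityTheory.IndepFun X Y P) :
    Integrable (fun ω => h (X ω + Y ω)) P ↔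
      Integrable (fun ω => h (X ω)) P ∧ Integrable (fun ω => h (Y ω)) P := by
  by_cases hz : ∃ x0, h x0 = 0
  · obtain ⟨x0, hx0⟩ := hz
    have hzero : ∀ x, h x = 0 := by
      intro x
      have := hsub (x - x0) x0
      rw [hx0, mul_zero, sub_add_cancel] at this
      exact le_antisymm this (hnn x)
    simp only [hzero]
    simp [integrable_const]
  · push_neg at hz
    have hpos : ∀ x, 0 < h x := fun x => lt_of_le_of_ne (hnn x) (Ne.symm (hz x))
    constructor
    · intro hint
      refine ⟨key13 P h hmeas hnn B hB hsub hpos X Y hX hY hindep hint, ?_⟩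
      have hint' : Integrable (fun ω => h (Y ω + X ω)) P := by
        simpa [add_comm] using hint
      exact key13 P h hmeas hnn B hB hsub hpos Y X hY hX hindep.symm hint'
    · rintro ⟨hXi, hYi⟩
      have hmul : Integrable ((fun ω => h (X ω)) * fun ω => h (Y ω)) P :=
        (hindep.comp hmeas hmeas).integrable_mul hXi hYi
      have hg : Integrable (fun ω => B * (h (X ω) * h (Y ω))) P := by
        exact (hmul.const_mul B).congr (Filter.Eventually.of_forall fun ω => rfl)
      refine hg.mono ((hmeas.comp (hX.add hY)).aestronglyMeasurable) ?_
      refine Filter.Eventually.of_forall fun ω => ?_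
      rw [Real.norm_of_nonneg (hnn _), Real.norm_of_nonneg (mul_nonneg hB.le (mul_nonneg (hnn _) (hnn _)))]
      calc h (X ω + Y ω) ≤ B * h (X ω) * h (Y ω) := hsub _ _
      _ = B * (h (X ω) * h (Y ω)) := by ring
end
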